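/- arXiv:1209.3575 — 2 statements merged into one kernel-verified Lean document; each statement's English description precedes it below -/
import Mathlib

section
/- Let M be a matroid of rank 3 on a finite set E and let E = E_1 ∪ E_2 ∪ E_3 be a partition of E into three disjoint sets such that: (1) r(M|E_i) ≥ 2 for each i = 1,2,3; and (2) for every line l of M (a flat of M of rank 2) containing at least 3 elements: (a) if l ∩ E_1 ≠ ∅ then |l ∩ (E_2 ∪ E_3)| ≤ 1, and (b) if l ∩ E_3 ≠ ∅ then |l ∩ (E_1 ∪ E_2)| ≤ 1. Then E = E_1 ∪ E_2 ∪ E_3 together with the integers a_1 = a_2 = a_3 = 1 is a good 3-partition of M. -/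
/-!
With `a₁ = a₂ = a₃ = 1`, conditions (P2) come down to: a nonloop `x ∈ E₁` together with an
independent `Y ⊆ E₂ ∪ E₃` of size at most 2 is independent (and symmetrically with `E₃` against
`E₁ ∪ E₂`); (P2b) follows by applying both. If `x ∈ cl {y, z}`, the line `cl {y, z}` contains
`x, y, z`, so it is a long line meeting `E₁` with two points in `E₂ ∪ E₃`. If `{x, y}` is
dependent, then `y ∈ cl {x}`; since `E₂ ∪ E₃` has rank at least 2 it has a point `z ∉ cl {x}`, and
the line `cl {x, z}` contains `x, y, z`.
-/

open Matroid Set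

/-- The rank of a matroid: the supremum of the cardinalities of its independent sets. -/
noncomputable def mrk {α : Type*} (M : Matroid α) : ℕ :=
  sSup {n : ℕ | ∃ I, M.Indep I ∧ I.ncard = n}

/-- A good 3-partition of a rank-`r` matroid `M` (the `t = 3` case of the paper's good
`t`-partition). -/
def IsGoodPartition3 {α : Type*} (M : Matroid α) (r : ℕ) (E₁ E₂ E₃ : Set α)
    (a₁ a₂ a₃ : ℕ) : Prop :=
  E₁ ∪ E₂ ∪ E₃ = M.E ∧ Disjoint E₁ E₂ ∧ Disjoint E₁ E₃ ∧ Disjoint E₂ E₃ ∧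
  1 < mrk (M ↾ E₁) ∧ 1 < mrk (M ↾ E₂) ∧ 1 < mrk (M ↾ E₃) ∧
  0 < a₁ ∧ a₁ < mrk (M ↾ E₁) ∧ 0 < a₂ ∧ a₂ < mrk (M ↾ E₂) ∧
  0 < a₃ ∧ a₃ < mrk (M ↾ E₃) ∧
  r = a₁ + a₂ + a₃ ∧
  (∀ X Y : Set α, (M ↾ E₁).Indep X → X.ncard ≤ a₁ →
    (M ↾ (E₂ ∪ E₃)).Indep Y → Y.ncard ≤ a₂ + a₃ → M.Indep (X ∪ Y)) ∧
  (∀ X Y : Set α, (M ↾ (E₁ ∪ E₂)).Indep X → X.ncard ≤ a₁ + a₂ →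
    (M ↾ E₃).Indep Y → Y.ncard ≤ a₃ → M.Indep (X ∪ Y)) ∧
  (∀ X Y Z : Set α, (M ↾ E₁).Indep X → X.ncard ≤ a₁ →
    (M ↾ E₂).Indep Y → Y.ncard ≤ a₂ →
    (M ↾ E₃).Indep Z → Z.ncard ≤ a₃ → M.Indep (X ∪ Y ∪ Z))

namespace Matroid

variable {α : Type*} {M : Matroid α}

lemma cast_mrk [M.RankFinite] : (mrk M : ℕ∞) = M.eRank := by
  obtain ⟨B, hB⟩ := M.exists_isBase
  have hmax : IsGreatest {n : ℕ | ∃ I, M.Indep I ∧ I.ncard = n} B.ncard := by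
    refine ⟨⟨B, hB.indep, rfl⟩, ?_⟩
    rintro _ ⟨I, hI, rfl⟩
    have hle := hI.encard_le_eRank
    rwa [← hB.encard_eq_eRank, ← hI.finite.cast_ncard_eq, ← hB.finite.cast_ncard_eq,
      Nat.cast_le] at hle
  rw [mrk, hmax.csSup_eq, hB.finite.cast_ncard_eq, hB.encard_eq_eRank]

lemma cast_mrk_restrict [M.RankFinite] (R : Set α) : (mrk (M ↾ R) : ℕ∞) = M.eRk R :=
  cast_mrk

lemma eRk_closure_pair {p q : α} (hpq : M.Indep {p, q}) (hne : p ≠ q) :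
    M.eRk (M.closure {p, q}) = 2 := by
  rw [eRk_closure_eq, hpq.eRk_eq_encard, encard_pair hne]

def LongLinesThroughMeetOnce (M : Matroid α) (A B : Set α) : Prop :=
  ∀ l, M.IsFlat l → M.eRk l = 2 → 3 ≤ l.ncard → (l ∩ A).Nonempty → (l ∩ B).ncard ≤ 1

section LongLines

variable [M.Finite] {A B : Set α}

lemma LongLinesThroughMeetOnce.eq_of_mem (h : M.LongLinesThroughMeetOnce A B)
    (hAB : Disjoint A B) {l : Set α} (hl : M.IsFlat l) (hl2 : M.eRk l = 2) {x y z : α}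
    (hx : x ∈ l ∩ A) (hy : y ∈ l ∩ B) (hz : z ∈ l ∩ B) : y = z := by
  have hlfin : l.Finite := M.ground_finite.subset hl.subset_ground
  by_contra hyz
  have h3 : 3 ≤ l.ncard := by
    have hxyz : ({x, y, z} : Set α).ncard = 3 := ncard_eq_three.mpr
      ⟨x, y, z, hAB.ne_of_mem hx.2 hy.2, hAB.ne_of_mem hx.2 hz.2, hyz, rfl⟩
    rw [← hxyz]
    exact ncard_le_ncard (insert_subset hx.1 (insert_subset hy.1 (singleton_subset_iff.mpr hz.1)))
      hlfin
  exact hyz <| (ncard_le_one (hlfin.inter_of_left B)).mp (h l hl hl2 h3 ⟨x, hx⟩) y hy z hz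

lemma LongLinesThroughMeetOnce.indep_insert_pair (h : M.LongLinesThroughMeetOnce A B)
    (hAB : Disjoint A B) {x y z : α} (hxA : x ∈ A) (hx : x ∈ M.E) (hyB : y ∈ B) (hzB : z ∈ B)
    (hyz : y ≠ z) (hP : M.Indep {y, z}) : M.Indep {x, y, z} := by
  have hxP : x ∉ ({y, z} : Set α) := by
    rintro (rfl | rfl)
    exacts [hAB.ne_of_mem hxA hyB rfl, hAB.ne_of_mem hxA hzB rfl]
  refine (hP.insert_indep_iff_of_notMem hxP).mpr ⟨hx, fun hxcl ↦ hyz ?_⟩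
  exact h.eq_of_mem hAB (M.isFlat_closure _) (eRk_closure_pair hP hyz) ⟨hxcl, hxA⟩
    ⟨M.subset_closure _ hP.subset_ground (by simp), hyB⟩
    ⟨M.subset_closure _ hP.subset_ground (by simp), hzB⟩

lemma LongLinesThroughMeetOnce.indep_pair (h : M.LongLinesThroughMeetOnce A B)
    (hAB : Disjoint A B) (hB : 2 ≤ M.eRk B) {x y : α} (hxA : x ∈ A) (hx : M.IsNonloop x)
    (hyB : y ∈ B) (hyE : y ∈ M.E) : M.Indep {x, y} := by
  obtain ⟨z, hzB, hzE, hzx⟩ : ∃ z ∈ B, z ∈ M.E ∧ z ∉ M.closure {x} := by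
    by_contra! hBx
    have hle : M.eRk B ≤ 1 := calc
      M.eRk B = M.eRk (B ∩ M.E) := (M.eRk_inter_ground B).symm
      _ ≤ M.eRk (M.closure {x}) := M.eRk_mono fun z hz ↦ hBx z hz.1 hz.2
      _ = M.eRk {x} := M.eRk_closure_eq _
      _ ≤ 1 := M.eRk_singleton_le x
    exact absurd (hB.trans hle) (by norm_num)
  have hxz : x ≠ z := by
    rintro rfl
    exact hzx (M.mem_closure_of_mem rfl)
  have hxzI : M.Indep {x, z} := by
    rw [pair_comm, hx.indep.insert_indep_iff_of_notMem hxz.symm]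
    exact ⟨hzE, hzx⟩
  by_contra hxy
  have hycl : y ∈ M.closure {x} := by
    rw [pair_comm, hx.indep.insert_indep_iff_of_notMem (hAB.ne_of_mem hxA hyB).symm] at hxy
    simpa [hyE] using hxy
  have hyz : y = z := h.eq_of_mem hAB (M.isFlat_closure _) (eRk_closure_pair hxzI hxz)
    ⟨M.subset_closure _ hxzI.subset_ground (by simp), hxA⟩
    ⟨M.closure_subset_closure (by simp) hycl, hyB⟩
    ⟨M.subset_closure _ hxzI.subset_ground (by simp), hzB⟩
  exact hzx (hyz ▸ hycl)

lemma LongLinesThroughMeetOnce.indep_insert (h : M.LongLinesThroughMeetOnce A B)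
    (hAB : Disjoint A B) (hB : 2 ≤ M.eRk B) {x : α} (hxA : x ∈ A) (hx : M.IsNonloop x)
    {Y : Set α} (hYB : Y ⊆ B) (hY : M.Indep Y) (hY2 : Y.ncard ≤ 2) : M.Indep (insert x Y) := by
  obtain h0 | h1 | h2 : Y.ncard = 0 ∨ Y.ncard = 1 ∨ Y.ncard = 2 := by omega
  · rw [ncard_eq_zero hY.finite] at h0
    simpa [h0] using hx.indep
  · obtain ⟨y, rfl⟩ := ncard_eq_one.mp h1
    exact h.indep_pair hAB hB hxA hx (hYB rfl) (hY.subset_ground rfl)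
  · obtain ⟨y, z, hyz, rfl⟩ := ncard_eq_two.mp h2
    exact h.indep_insert_pair hAB hxA hx.mem_ground (hYB (by simp)) (hYB (by simp)) hyz hY

lemma LongLinesThroughMeetOnce.indep_union (h : M.LongLinesThroughMeetOnce A B)
    (hAB : Disjoint A B) (hB : 2 ≤ M.eRk B) {X Y : Set α} (hXA : X ⊆ A) (hX : M.Indep X)
    (hX1 : X.ncard ≤ 1) (hYB : Y ⊆ B) (hY : M.Indep Y) (hY2 : Y.ncard ≤ 2) :
    M.Indep (X ∪ Y) := by
  obtain rfl | ⟨x, rfl⟩ := (ncard_le_one_iff_eq hX.finite).mp hX1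
  · simpa using hY
  · rw [singleton_union]
    exact h.indep_insert hAB hB (hXA rfl) (indep_singleton.mp hX) hYB hY hY2

end LongLines

end Matroid

theorem statement12_general {α : Type*} (M : Matroid α) (hfin : M.E.Finite)
    (E₁ E₂ E₃ : Set α) (hpart : E₁ ∪ E₂ ∪ E₃ = M.E)
    (hd₁₂ : Disjoint E₁ E₂) (hd₁₃ : Disjoint E₁ E₃) (hd₂₃ : Disjoint E₂ E₃)
    (h1 : 2 ≤ mrk (M ↾ E₁)) (h2 : 2 ≤ mrk (M ↾ E₂)) (h3 : 2 ≤ mrk (M ↾ E₃))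
    (hline : ∀ l : Set α, M.IsFlat l → mrk (M ↾ l) = 2 → 3 ≤ l.ncard →
      ((l ∩ E₁).Nonempty → (l ∩ (E₂ ∪ E₃)).ncard ≤ 1) ∧
      ((l ∩ E₃).Nonempty → (l ∩ (E₁ ∪ E₂)).ncard ≤ 1)) :
    IsGoodPartition3 M 3 E₁ E₂ E₃ 1 1 1 := by
  have : M.Finite := ⟨hfin⟩
  have hmrk (l : Set α) (hl : M.eRk l = 2) : mrk (M ↾ l) = 2 := by
    exact_mod_cast (cast_mrk_restrict l).trans hl
  have hline₁ : M.LongLinesThroughMeetOnce E₁ (E₂ ∪ E₃) :=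
    fun l hl hl2 h3 ↦ (hline l hl (hmrk l hl2) h3).1
  have hline₃ : M.LongLinesThroughMeetOnce E₃ (E₁ ∪ E₂) :=
    fun l hl hl2 h3 ↦ (hline l hl (hmrk l hl2) h3).2
  have hrk₁₂ : 2 ≤ M.eRk (E₁ ∪ E₂) := by
    grw [← M.eRk_mono subset_union_left, ← cast_mrk_restrict]
    exact_mod_cast h1
  have hrk₂₃ : 2 ≤ M.eRk (E₂ ∪ E₃) := by
    grw [← M.eRk_mono subset_union_right, ← cast_mrk_restrict]
    exact_mod_cast h3
  have hd₁ : Disjoint E₁ (E₂ ∪ E₃) := disjoint_union_right.mpr ⟨hd₁₂, hd₁₃⟩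
  have hd₃ : Disjoint E₃ (E₁ ∪ E₂) := disjoint_union_right.mpr ⟨hd₁₃.symm, hd₂₃.symm⟩
  refine ⟨hpart, hd₁₂, hd₁₃, hd₂₃, h1, h2, h3, one_pos, h1, one_pos, h2, one_pos, h3, rfl,
    ?_, ?_, ?_⟩ <;> simp only [restrict_indep_iff]
  · rintro X Y ⟨hX, hX₁⟩ hX1 ⟨hY, hY₂₃⟩ hY2
    exact hline₁.indep_union hd₁ hrk₂₃ hX₁ hX hX1 hY₂₃ hY hY2
  · rintro X Y ⟨hX, hX₁₂⟩ hX2 ⟨hY, hY₃⟩ hY1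
    rw [union_comm]
    exact hline₃.indep_union hd₃ hrk₁₂ hY₃ hY hY1 hX₁₂ hX hX2
  · rintro X Y Z ⟨hX, hX₁⟩ hX1 ⟨hY, hY₂⟩ hY1 ⟨hZ, hZ₃⟩ hZ1
    have hXY := hline₁.indep_union hd₁ hrk₂₃ hX₁ hX hX1 (hY₂.trans subset_union_left) hY (by omega)
    rw [union_comm]
    exact hline₃.indep_union hd₃ hrk₁₂ hZ₃ hZ hZ1 (union_subset_union hX₁ hY₂) hXY
      ((ncard_union_le X Y).trans (by omega))

/-- geometric sufficient conditions for a rank-3 matroid : if every block of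
the partition `E₁ ∪ E₂ ∪ E₃` has rank ≥ 2 and every line (rank-2 flat) with at least 3
points satisfies the stated separation conditions, then the partition with
`a₁ = a₂ = a₃ = 1` is a good 3-partition of `M`. -/
theorem statement12 {α : Type*} (M : Matroid α) (hfin : M.E.Finite) (hrank : mrk M = 3)
    (E₁ E₂ E₃ : Set α) (hpart : E₁ ∪ E₂ ∪ E₃ = M.E)
    (hd₁₂ : Disjoint E₁ E₂) (hd₁₃ : Disjoint E₁ E₃) (hd₂₃ : Disjoint E₂ E₃)
    (h1 : 2 ≤ mrk (M ↾ E₁)) (h2 : 2 ≤ mrk (M ↾ E₂)) (h3 : 2 ≤ mrk (M ↾ E₃))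
    (hline : ∀ l : Set α, M.IsFlat l → mrk (M ↾ l) = 2 → 3 ≤ l.ncard →
      ((l ∩ E₁).Nonempty → (l ∩ (E₂ ∪ E₃)).ncard ≤ 1) ∧
      ((l ∩ E₃).Nonempty → (l ∩ (E₁ ∪ E₂)).ncard ≤ 1)) :
    IsGoodPartition3 M 3 E₁ E₂ E₃ 1 1 1 :=
  statement12_general M hfin E₁ E₂ E₃ hpart hd₁₂ hd₁₃ hd₂₃ h1 h2 h3 hline
end

section
/- Let M_1 and M_2 be matroids on disjoint finite ground sets E_1 and E_2, of ranks r_1 and r_2 respectively. Then the base polytope P(M_1 ⊕ M_2) of the direct sum admits a hyperplane split if and only if P(M_1) admits a hyperplane split or P(M_2) admits a hyperplane split. -/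
open Matroid Set

/-- The 0/1 incidence vector of a set. -/
noncomputable def incVec {α : Type*} (B : Set α) : α → ℝ := B.indicator 1

/-- The matroid base polytope: the convex hull of the incidence vectors of the bases. -/
noncomputable def basePolytope {α : Type*} (M : Matroid α) : Set (α → ℝ) :=
  convexHull ℝ {x | ∃ B, M.IsBase B ∧ x = incVec B}

/-- `P(M)` admits a hyperplane split : `P(M) = P(N₁) ∪ P(N₂)` for matroids `N₁, N₂` on the
same ground set, each `P(Nᵢ)` a proper subset of `P(M)`, with `P(N₁) ∩ P(N₂)` a face of
both pieces. -/
def HasHyperplaneSplit {α : Type*} (M : Matroid α) : Prop :=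
  ∃ N₁ N₂ : Matroid α, N₁.E = M.E ∧ N₂.E = M.E ∧
    basePolytope M = basePolytope N₁ ∪ basePolytope N₂ ∧
    basePolytope N₁ ⊂ basePolytope M ∧ basePolytope N₂ ⊂ basePolytope M ∧
    IsExtreme ℝ (basePolytope N₁) (basePolytope N₁ ∩ basePolytope N₂) ∧
    IsExtreme ℝ (basePolytope N₂) (basePolytope N₁ ∩ basePolytope N₂)

/-!
`P(M₁ ⊕ M₂)` is the Minkowski sum `P(M₁) + P(M₂)` of two polytopes lying in complementary
coordinate subspaces, so its points decompose uniquely, and unions, strict inclusions and faces of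
`P + Q₁`, `P + Q₂` correspond exactly to those of `Q₁`, `Q₂`; this gives the backward direction.

Conversely, a 0/1 point of a 0/1-polytope is one of its vertices, so the bases of the two pieces
`N₁`, `N₂` of a split of `P(M₁ ⊕ M₂)` are bases of `M₁ ⊕ M₂`. A basis-exchange argument then shows
that such a matroid is itself a direct sum `K ⊕ L`, with the bases of `K` among those of `M₁` and
the bases of `L` among those of `M₂`. Every pair of vertices of `P(M₁)` and `P(M₂)` lies in
`P(K₁) + P(L₁)` or in `P(K₂) + P(L₂)`, and neither piece is everything; this forces
`P(K₁) = P(K₂) = P(M₁)` or `P(L₁) = P(L₂) = P(M₂)`, and the split of the sum cancels to a split of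
the other factor.
-/

open scoped Pointwise

def IsHyperplaneSplit (𝕜 : Type*) {E : Type*} [Semiring 𝕜] [PartialOrder 𝕜] [AddCommMonoid E]
    [SMul 𝕜 E] (P P₁ P₂ : Set E) : Prop :=
  P = P₁ ∪ P₂ ∧ P₁ ⊂ P ∧ P₂ ⊂ P ∧ IsExtreme 𝕜 P₁ (P₁ ∩ P₂) ∧ IsExtreme 𝕜 P₂ (P₁ ∩ P₂)

theorem hasHyperplaneSplit_iff {α : Type*} {M : Matroid α} :
    HasHyperplaneSplit M ↔ ∃ N₁ N₂ : Matroid α, N₁.E = M.E ∧ N₂.E = M.E ∧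
      IsHyperplaneSplit ℝ (basePolytope M) (basePolytope N₁) (basePolytope N₂) :=
  Iff.rfl

theorem Set.subset_inter_or_subset_inter_of_prod_subset_union {β γ : Type*}
    {s s₁ s₂ : Set β} {t t₁ t₂ : Set γ} (h : s ×ˢ t ⊆ s₁ ×ˢ t₁ ∪ s₂ ×ˢ t₂)
    (h₁ : ¬(s ⊆ s₁ ∧ t ⊆ t₁)) (h₂ : ¬(s ⊆ s₂ ∧ t ⊆ t₂)) :
    s ⊆ s₁ ∩ s₂ ∨ t ⊆ t₁ ∩ t₂ := by
  have h₁₂ : s ⊆ s₁ ∨ t ⊆ t₂ := or_iff_not_imp_left.2 fun hs b hb => by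
    obtain ⟨a, ha, ha₁⟩ := not_subset.1 hs
    exact ((h (mk_mem_prod ha hb)).resolve_left fun hab => ha₁ hab.1).2
  have h₂₁ : s ⊆ s₂ ∨ t ⊆ t₁ := or_iff_not_imp_left.2 fun hs b hb => by
    obtain ⟨a, ha, ha₂⟩ := not_subset.1 hs
    exact ((h (mk_mem_prod ha hb)).resolve_right fun hab => ha₂ hab.1).2
  rw [subset_inter_iff, subset_inter_iff]
  tauto

theorem Submodule.add_eq_add_iff_of_disjoint {R E : Type*} [Ring R] [AddCommGroup E] [Module R E]
    {U W : Submodule R E} (hUW : Disjoint U W) {u u' w w' : E}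
    (hu : u ∈ U) (hu' : u' ∈ U) (hw : w ∈ W) (hw' : w' ∈ W) :
    u + w = u' + w' ↔ u = u' ∧ w = w' := by
  refine ⟨fun h => ?_, fun ⟨h₁, h₂⟩ => h₁ ▸ h₂ ▸ rfl⟩
  have hsub : u - u' = w' - w := by rw [sub_eq_sub_iff_add_eq_add, h, add_comm]
  have huu' : u = u' := sub_eq_zero.1 <|
    Submodule.disjoint_def.1 hUW _ (sub_mem hu hu') (hsub ▸ sub_mem hw' hw)
  subst huu'
  exact ⟨rfl, add_left_cancel h⟩

theorem convexHull_eq_of_subset_of_subset_convexHull {𝕜 E : Type*} [Semiring 𝕜] [PartialOrder 𝕜]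
    [AddCommMonoid E] [Module 𝕜 E] {S T : Set E} (hST : S ⊆ T)
    (hTS : T ⊆ convexHull 𝕜 S) : convexHull 𝕜 S = convexHull 𝕜 T :=
  (convexHull_mono hST).antisymm ((convex_convexHull 𝕜 S).convexHull_subset_iff.2 hTS)

section MinkowskiSum

variable {𝕜 E : Type*} [Ring 𝕜] [AddCommGroup E] [Module 𝕜 E] {U W : Submodule 𝕜 E}
  {P Q Q' Q₁ Q₂ C : Set E}

theorem Set.add_mem_add_iff_of_disjoint (hUW : Disjoint U W) (hPU : P ⊆ U) (hQ : Q ⊆ W)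
    {u w : E} (hu : u ∈ U) (hw : w ∈ W) : u + w ∈ P + Q ↔ u ∈ P ∧ w ∈ Q := by
  refine ⟨?_, fun ⟨hp, hq⟩ => add_mem_add hp hq⟩
  rintro ⟨p, hp, q, hq, h⟩
  obtain ⟨rfl, rfl⟩ := (Submodule.add_eq_add_iff_of_disjoint hUW (hPU hp) hu (hQ hq) hw).1 h
  exact ⟨hp, hq⟩

theorem Set.add_subset_add_left_iff_of_disjoint (hUW : Disjoint U W) (hP : P.Nonempty)
    (hPU : P ⊆ U) (hQ : Q ⊆ W) (hQ' : Q' ⊆ W) : P + Q ⊆ P + Q' ↔ Q ⊆ Q' := by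
  refine ⟨fun h y hy => ?_, add_subset_add_left⟩
  obtain ⟨p, hp⟩ := hP
  exact ((add_mem_add_iff_of_disjoint hUW hPU hQ' (hPU hp) (hQ hy)).1 (h (add_mem_add hp hy))).2

theorem Set.add_right_inj_of_disjoint (hUW : Disjoint U W) (hP : P.Nonempty) (hPU : P ⊆ U)
    (hQ : Q ⊆ W) (hQ' : Q' ⊆ W) : P + Q = P + Q' ↔ Q = Q' := by
  simp only [Subset.antisymm_iff, add_subset_add_left_iff_of_disjoint hUW hP hPU hQ hQ',
    add_subset_add_left_iff_of_disjoint hUW hP hPU hQ' hQ]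

theorem Set.add_ssubset_add_left_iff_of_disjoint (hUW : Disjoint U W) (hP : P.Nonempty)
    (hPU : P ⊆ U) (hQ : Q ⊆ W) (hQ' : Q' ⊆ W) : P + Q ⊂ P + Q' ↔ Q ⊂ Q' := by
  simp only [ssubset_iff_subset_not_subset, add_subset_add_left_iff_of_disjoint hUW hP hPU hQ hQ',
    add_subset_add_left_iff_of_disjoint hUW hP hPU hQ' hQ]

theorem Set.add_inter_add_of_disjoint (hUW : Disjoint U W) (hPU : P ⊆ U) (hQ₁ : Q₁ ⊆ W)
    (hQ₂ : Q₂ ⊆ W) : (P + Q₁) ∩ (P + Q₂) = P + (Q₁ ∩ Q₂) := by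
  refine Subset.antisymm ?_
    (subset_inter (add_subset_add_left inter_subset_left) (add_subset_add_left inter_subset_right))
  rintro _ ⟨⟨p, hp, q, hq, rfl⟩, h₂⟩
  exact add_mem_add hp ⟨hq, ((add_mem_add_iff_of_disjoint hUW hPU hQ₂ (hPU hp) (hQ₁ hq)).1 h₂).2⟩

variable [PartialOrder 𝕜] [IsOrderedRing 𝕜]

theorem isExtreme_add_iff_of_disjoint (hUW : Disjoint U W) (hP : P.Nonempty) (hPU : P ⊆ U)
    (hQ : Q ⊆ W) (hC : C ⊆ W) : IsExtreme 𝕜 (P + Q) (P + C) ↔ IsExtreme 𝕜 Q C := by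
  have hsub := add_subset_add_left_iff_of_disjoint hUW hP hPU hC hQ
  constructor
  · intro hext
    obtain ⟨p, hp⟩ := hP
    refine ⟨hsub.1 hext.subset, fun x hx y hy z hz hxyz => ?_⟩
    have := hext.left_mem_of_mem_openSegment (add_mem_add hp hx) (add_mem_add hp hy)
      (add_mem_add hp hz) ((mem_openSegment_translate 𝕜 p).2 hxyz)
    exact ((add_mem_add_iff_of_disjoint hUW hPU hC (hPU hp) (hQ hx)).1 this).2
  · intro hext
    refine ⟨hsub.2 hext.subset, ?_⟩
    rintro _ ⟨p₁, hp₁, q₁, hq₁, rfl⟩ _ ⟨p₂, hp₂, q₂, hq₂, rfl⟩ _ ⟨p, hp, c, hc, rfl⟩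
      ⟨a, b, ha, hb, hab, h⟩
    have hsplit : (a • p₁ + b • p₂) + (a • q₁ + b • q₂) = p + c := by
      beta_reduce at h
      rw [← h, smul_add, smul_add]; abel
    have hc' : a • q₁ + b • q₂ = c :=
      ((Submodule.add_eq_add_iff_of_disjoint hUW
        (U.add_mem (U.smul_mem a (hPU hp₁)) (U.smul_mem b (hPU hp₂))) (hPU hp)
        (W.add_mem (W.smul_mem a (hQ hq₁)) (W.smul_mem b (hQ hq₂))) (hC hc)).1 hsplit).2
    exact add_mem_add hp₁ (hext.left_mem_of_mem_openSegment hq₁ hq₂ hc ⟨a, b, ha, hb, hab, hc'⟩)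

theorem isHyperplaneSplit_add_iff (hUW : Disjoint U W) (hP : P.Nonempty) (hPU : P ⊆ U)
    (hQ : Q ⊆ W) (hQ₁ : Q₁ ⊆ W) (hQ₂ : Q₂ ⊆ W) :
    IsHyperplaneSplit 𝕜 (P + Q) (P + Q₁) (P + Q₂) ↔ IsHyperplaneSplit 𝕜 Q Q₁ Q₂ := by
  have hQ₁₂ : Q₁ ∩ Q₂ ⊆ W := inter_subset_left.trans hQ₁
  rw [IsHyperplaneSplit, IsHyperplaneSplit, ← add_union, add_inter_add_of_disjoint hUW hPU hQ₁ hQ₂,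
    add_right_inj_of_disjoint hUW hP hPU hQ (union_subset hQ₁ hQ₂),
    add_ssubset_add_left_iff_of_disjoint hUW hP hPU hQ₁ hQ,
    add_ssubset_add_left_iff_of_disjoint hUW hP hPU hQ₂ hQ,
    isExtreme_add_iff_of_disjoint hUW hP hPU hQ₁ hQ₁₂,
    isExtreme_add_iff_of_disjoint hUW hP hPU hQ₂ hQ₁₂]

theorem IsHyperplaneSplit.of_convexHull_add (hUW : Disjoint U W) {V V' V₁ V₂ V₁' V₂' : Set E}
    (hV : V ⊆ U) (hV' : V' ⊆ W) (hV₁ : V₁ ⊆ V) (hV₂ : V₂ ⊆ V) (hV₁' : V₁' ⊆ V')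
    (hV₂' : V₂' ⊆ V')
    (hs : IsHyperplaneSplit 𝕜 (convexHull 𝕜 V + convexHull 𝕜 V')
      (convexHull 𝕜 V₁ + convexHull 𝕜 V₁') (convexHull 𝕜 V₂ + convexHull 𝕜 V₂')) :
    IsHyperplaneSplit 𝕜 (convexHull 𝕜 V) (convexHull 𝕜 V₁) (convexHull 𝕜 V₂) ∨
      IsHyperplaneSplit 𝕜 (convexHull 𝕜 V') (convexHull 𝕜 V₁') (convexHull 𝕜 V₂') := by
  have hU {S : Set E} (hS : S ⊆ V) : convexHull 𝕜 S ⊆ U := convexHull_min (hS.trans hV) U.convex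
  have hW {S : Set E} (hS : S ⊆ V') : convexHull 𝕜 S ⊆ W := convexHull_min (hS.trans hV') W.convex
  have hcover : V ×ˢ V' ⊆
      convexHull 𝕜 V₁ ×ˢ convexHull 𝕜 V₁' ∪ convexHull 𝕜 V₂ ×ˢ convexHull 𝕜 V₂' := by
    rintro ⟨x, y⟩ ⟨hx, hy⟩
    have hxy : x + y ∈
        (convexHull 𝕜 V₁ + convexHull 𝕜 V₁') ∪ (convexHull 𝕜 V₂ + convexHull 𝕜 V₂') :=
      hs.1 ▸ add_mem_add (subset_convexHull 𝕜 V hx) (subset_convexHull 𝕜 V' hy)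
    exact hxy.imp (add_mem_add_iff_of_disjoint hUW (hU hV₁) (hW hV₁') (hV hx) (hV' hy)).1
      (add_mem_add_iff_of_disjoint hUW (hU hV₂) (hW hV₂') (hV hx) (hV' hy)).1
  have hproper₁ : ¬(V ⊆ convexHull 𝕜 V₁ ∧ V' ⊆ convexHull 𝕜 V₁') := fun ⟨h, h'⟩ => hs.2.1.ne <| by
    rw [convexHull_eq_of_subset_of_subset_convexHull hV₁ h,
      convexHull_eq_of_subset_of_subset_convexHull hV₁' h']
  have hproper₂ : ¬(V ⊆ convexHull 𝕜 V₂ ∧ V' ⊆ convexHull 𝕜 V₂') := fun ⟨h, h'⟩ => hs.2.2.1.ne <| by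
    rw [convexHull_eq_of_subset_of_subset_convexHull hV₂ h,
      convexHull_eq_of_subset_of_subset_convexHull hV₂' h']
  have hne : (convexHull 𝕜 V + convexHull 𝕜 V').Nonempty := nonempty_of_ssubset' hs.2.1
  rcases subset_inter_or_subset_inter_of_prod_subset_union hcover hproper₁ hproper₂ with h | h
  · right
    rw [convexHull_eq_of_subset_of_subset_convexHull hV₁ (h.trans inter_subset_left),
      convexHull_eq_of_subset_of_subset_convexHull hV₂ (h.trans inter_subset_right)] at hs
    exact (isHyperplaneSplit_add_iff hUW hne.of_add_left (hU subset_rfl) (hW subset_rfl)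
      (hW hV₁') (hW hV₂')).1 hs
  · left
    rw [convexHull_eq_of_subset_of_subset_convexHull hV₁' (h.trans inter_subset_left),
      convexHull_eq_of_subset_of_subset_convexHull hV₂' (h.trans inter_subset_right),
      add_comm (convexHull 𝕜 V), add_comm (convexHull 𝕜 V₁), add_comm (convexHull 𝕜 V₂)] at hs
    exact (isHyperplaneSplit_add_iff hUW.symm hne.of_add_right (hW subset_rfl) (hU subset_rfl)
      (hU hV₁) (hU hV₂)).1 hs

end MinkowskiSum

section BasePolytope

variable {α : Type*}

def supportedOn (R : Type*) [Semiring R] (s : Set α) : Submodule R (α → R) :=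
  Submodule.pi sᶜ fun _ => ⊥

theorem mem_supportedOn {R : Type*} [Semiring R] {s : Set α} {x : α → R} :
    x ∈ supportedOn R s ↔ ∀ e ∉ s, x e = 0 := by
  simp [supportedOn]

theorem disjoint_supportedOn {R : Type*} [Semiring R] {s t : Set α} (h : Disjoint s t) :
    Disjoint (supportedOn R s) (supportedOn R t) := by
  refine Submodule.disjoint_def.2 fun x hs ht => funext fun e => ?_
  by_cases he : e ∈ s
  · exact mem_supportedOn.1 ht e (h.notMem_of_mem_left he)
  · exact mem_supportedOn.1 hs e he

def baseVertices (M : Matroid α) : Set (α → ℝ) :=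
  {x | ∃ B, M.IsBase B ∧ x = incVec B}

theorem incVec_injective : Function.Injective (incVec (α := α)) :=
  fun _ _ h => indicator_one_inj ℝ h

theorem incVec_union {A C : Set α} (h : Disjoint A C) : incVec (A ∪ C) = incVec A + incVec C :=
  indicator_union_of_disjoint h 1

theorem incVec_mem_supportedOn {B s : Set α} (h : B ⊆ s) : incVec B ∈ supportedOn ℝ s :=
  mem_supportedOn.2 fun _ he => indicator_of_notMem (fun hB => he (h hB)) 1

theorem incVec_mem_extremePoints_unitCube (B : Set α) :
    incVec B ∈ (univ.pi fun _ : α => Icc (0 : ℝ) 1).extremePoints ℝ := by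
  rw [extremePoints_pi]
  intro e _
  rw [extremePoints_Icc zero_le_one]
  by_cases he : e ∈ B <;> simp [incVec, he]

theorem baseVertices_subset_supportedOn (M : Matroid α) : baseVertices M ⊆ supportedOn ℝ M.E := by
  rintro _ ⟨B, hB, rfl⟩
  exact incVec_mem_supportedOn hB.subset_ground

theorem basePolytope_subset_supportedOn (M : Matroid α) : basePolytope M ⊆ supportedOn ℝ M.E :=
  convexHull_min (baseVertices_subset_supportedOn M) (Submodule.convex _)

theorem basePolytope_subset_unitCube (M : Matroid α) :
    basePolytope M ⊆ univ.pi fun _ => Icc (0 : ℝ) 1 := by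
  refine convexHull_min ?_ (convex_pi fun _ _ => convex_Icc 0 1)
  rintro _ ⟨B, -, rfl⟩
  exact extremePoints_subset (incVec_mem_extremePoints_unitCube B)

theorem incVec_mem_basePolytope_iff {M : Matroid α} {B : Set α} :
    incVec B ∈ basePolytope M ↔ M.IsBase B := by
  refine ⟨fun hB => ?_, fun hB => subset_convexHull ℝ _ ⟨B, hB, rfl⟩⟩
  obtain ⟨B', hB', hBB'⟩ := extremePoints_convexHull_subset <|
    inter_extremePoints_subset_extremePoints_of_subset (basePolytope_subset_unitCube M)
      ⟨hB, incVec_mem_extremePoints_unitCube B⟩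
  rwa [incVec_injective hBB']

theorem Matroid.IsBase.of_basePolytope_subset {M N : Matroid α} {B : Set α}
    (hNM : basePolytope N ⊆ basePolytope M) (hB : N.IsBase B) : M.IsBase B :=
  incVec_mem_basePolytope_iff.1 (hNM (incVec_mem_basePolytope_iff.2 hB))

theorem basePolytope_nonempty (M : Matroid α) : (basePolytope M).Nonempty :=
  let ⟨_, hB⟩ := M.exists_isBase
  ⟨_, incVec_mem_basePolytope_iff.2 hB⟩

theorem Matroid.IsBase.union_isBase_disjointSum {M₁ M₂ : Matroid α} {A C : Set α}
    (h : Disjoint M₁.E M₂.E) (hA : M₁.IsBase A) (hC : M₂.IsBase C) :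
    (M₁.disjointSum M₂ h).IsBase (A ∪ C) := by
  have hA₂ : A ∩ M₂.E = ∅ := (h.mono_left hA.subset_ground).inter_eq
  have hC₁ : C ∩ M₁.E = ∅ := (h.symm.mono_left hC.subset_ground).inter_eq
  rw [disjointSum_isBase_iff, union_inter_distrib_right, union_inter_distrib_right,
    inter_eq_left.2 hA.subset_ground, inter_eq_left.2 hC.subset_ground, hA₂, hC₁, union_empty,
    empty_union]
  exact ⟨hA, hC, union_subset_union hA.subset_ground hC.subset_ground⟩

theorem baseVertices_disjointSum (M₁ M₂ : Matroid α) (h : Disjoint M₁.E M₂.E) :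
    baseVertices (M₁.disjointSum M₂ h) = baseVertices M₁ + baseVertices M₂ := by
  ext x
  constructor
  · rintro ⟨B, hB, rfl⟩
    obtain ⟨A, C, hA, hC, hAC, rfl⟩ := hB.eq_union_image_of_disjointSum
    exact ⟨_, ⟨A, hA, rfl⟩, _, ⟨C, hC, rfl⟩, (incVec_union hAC).symm⟩
  · rintro ⟨_, ⟨A, hA, rfl⟩, _, ⟨C, hC, rfl⟩, rfl⟩
    exact ⟨A ∪ C, hA.union_isBase_disjointSum h hC,
      (incVec_union (h.mono hA.subset_ground hC.subset_ground)).symm⟩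

theorem basePolytope_disjointSum (M₁ M₂ : Matroid α) (h : Disjoint M₁.E M₂.E) :
    basePolytope (M₁.disjointSum M₂ h) = basePolytope M₁ + basePolytope M₂ :=
  (congrArg (convexHull ℝ) (baseVertices_disjointSum M₁ M₂ h)).trans (convexHull_add _ _)

end BasePolytope

namespace Matroid

variable {α : Type*} {N K M₁ M₂ : Matroid α}

theorem isBase_inter_union_sdiff [K.RankFinite] {S : Set α}
    (hK : ∀ B, N.IsBase B → K.IsBase (B ∩ S)) {B B' : Set α} (hB : N.IsBase B)
    (hB' : N.IsBase B') : N.IsBase ((B' ∩ S) ∪ (B \ S)) := by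
  obtain ⟨n, hn⟩ : ∃ n, ((B ∩ S) \ B').ncard = n := ⟨_, rfl⟩
  induction n generalizing B with
  | zero =>
    have hsub : B ∩ S ⊆ B' ∩ S := subset_inter
      (sdiff_eq_empty.1 ((ncard_eq_zero (hK B hB).finite.sdiff).1 hn)) inter_subset_right
    rwa [((hK B hB).eq_of_subset_isBase (hK B' hB') hsub).symm, inter_union_sdiff]
  | succ n ih =>
    obtain ⟨e, ⟨heB, heS⟩, heB'⟩ : ((B ∩ S) \ B').Nonempty :=
      nonempty_of_ncard_ne_zero (by omega)
    obtain ⟨f, ⟨hfB', hfB⟩, hBf⟩ := hB.exchange hB' ⟨heB, heB'⟩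
    -- swapping `e` for an `f` outside `S` would shrink the base `B ∩ S` of `K`
    have hfS : f ∈ S := by
      by_contra hfS
      have hsub : insert f (B \ {e}) ∩ S ⊆ (B ∩ S) \ {e} := by
        rintro x ⟨rfl | ⟨hxB, hxe⟩, hxS⟩
        exacts [absurd hxS hfS, ⟨⟨hxB, hxS⟩, hxe⟩]
      have heq := (hK _ hBf).eq_of_subset_isBase (hK B hB) (hsub.trans sdiff_subset)
      exact (hsub (by rw [heq]; exact ⟨heB, heS⟩)).2 rfl
    have hsdiff : insert f (B \ {e}) \ S = B \ S := by
      ext x; simp only [mem_sdiff, mem_insert_iff, mem_singleton_iff]; grind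
    have hcard : ((insert f (B \ {e}) ∩ S) \ B').ncard = n := by
      have : (insert f (B \ {e}) ∩ S) \ B' = ((B ∩ S) \ B') \ {e} := by
        ext x; simp only [mem_sdiff, mem_inter_iff, mem_insert_iff, mem_singleton_iff]; grind
      rw [this, ncard_sdiff_singleton_of_mem (show e ∈ (B ∩ S) \ B' from ⟨⟨heB, heS⟩, heB'⟩), hn,
        Nat.add_sub_cancel]
    simpa only [hsdiff] using ih hBf hcard

theorem isBase_restrict_iff_exists_isBase_inter {X I : Set α} (hX : X ⊆ N.E)
    (hK : ∀ B, N.IsBase B → K.IsBase (B ∩ X)) :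
    (N ↾ X).IsBase I ↔ ∃ B, N.IsBase B ∧ B ∩ X = I := by
  rw [isBase_restrict_iff hX]
  constructor
  · intro hI
    obtain ⟨B, hB, hIB⟩ := hI.indep.exists_isBase_superset
    exact ⟨B, hB, (hI.eq_of_subset_indep (hB.indep.subset inter_subset_left)
      (subset_inter hIB hI.subset) inter_subset_right).symm⟩
  · rintro ⟨B, hB, rfl⟩
    refine (hB.indep.subset inter_subset_left).isBasis_of_maximal_subset inter_subset_right
      (fun J hJ hBJ hJX => ?_) hX
    obtain ⟨B', hB', hJB'⟩ := hJ.exists_isBase_superset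
    have hJB'X : J ⊆ B' ∩ X := subset_inter hJB' hJX
    rwa [(hK B hB).eq_of_subset_isBase (hK B' hB') (hBJ.trans hJB'X)]

theorem baseVertices_restrict_subset {X : Set α} (hX : X ⊆ N.E)
    (hK : ∀ B, N.IsBase B → K.IsBase (B ∩ X)) : baseVertices (N ↾ X) ⊆ baseVertices K := by
  rintro _ ⟨I, hI, rfl⟩
  obtain ⟨B, hB, rfl⟩ := (isBase_restrict_iff_exists_isBase_inter hX hK).1 hI
  exact ⟨_, hK B hB, rfl⟩

theorem eq_disjointSum_restrict [M₁.RankFinite] (h : Disjoint M₁.E M₂.E)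
    (hE : N.E = (M₁.disjointSum M₂ h).E) (hN : ∀ B, N.IsBase B → (M₁.disjointSum M₂ h).IsBase B) :
    N = (N ↾ M₁.E).disjointSum (N ↾ M₂.E) h := by
  rw [disjointSum_ground_eq] at hE
  have hK₁ (B) (hB : N.IsBase B) : M₁.IsBase (B ∩ M₁.E) := (disjointSum_isBase_iff.1 (hN B hB)).1
  have hK₂ (B) (hB : N.IsBase B) : M₂.IsBase (B ∩ M₂.E) :=
    (disjointSum_isBase_iff.1 (hN B hB)).2.1
  have hsdiff {B : Set α} (hB : B ⊆ N.E) : B \ M₁.E = B ∩ M₂.E := by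
    rw [hE] at hB
    ext x; simp only [mem_sdiff, mem_inter_iff]; grind [disjoint_left.1 h]
  -- the disjointness proof `h` is only defeq to one about `(N ↾ Mᵢ.E).E`, so the `disjointSum`
  -- lemmas are applied as terms with explicit arguments rather than by `rw`
  refine ext_isBase (hE.trans (disjointSum_ground_eq (M := N ↾ M₁.E) (N := N ↾ M₂.E)).symm)
    fun B hBE => ?_
  refine Iff.trans ?_ disjointSum_isBase_iff.symm
  rw [isBase_restrict_iff_exists_isBase_inter (hE ▸ subset_union_left) hK₁,
    isBase_restrict_iff_exists_isBase_inter (hE ▸ subset_union_right) hK₂, restrict_ground_eq,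
    restrict_ground_eq, ← hE]
  refine ⟨fun hB => ⟨⟨B, hB, rfl⟩, ⟨B, hB, rfl⟩, hBE⟩, ?_⟩
  rintro ⟨⟨B₁, hB₁, hB₁B⟩, ⟨B₂, hB₂, hB₂B⟩, -⟩
  have := isBase_inter_union_sdiff hK₁ hB₂ hB₁
  rwa [hB₁B, hsdiff hB₂.subset_ground, hB₂B, ← hsdiff hBE, inter_union_sdiff] at this

theorem exists_basePolytope_eq_add [M₁.RankFinite] (h : Disjoint M₁.E M₂.E)
    (hE : N.E = (M₁.disjointSum M₂ h).E)
    (hN : basePolytope N ⊆ basePolytope (M₁.disjointSum M₂ h)) :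
    ∃ K L : Matroid α, K.E = M₁.E ∧ L.E = M₂.E ∧
      baseVertices K ⊆ baseVertices M₁ ∧ baseVertices L ⊆ baseVertices M₂ ∧
      basePolytope N = basePolytope K + basePolytope L := by
  have hN' (B) (hB : N.IsBase B) : (M₁.disjointSum M₂ h).IsBase B := hB.of_basePolytope_subset hN
  have hE' : N.E = M₁.E ∪ M₂.E := hE.trans disjointSum_ground_eq
  refine ⟨N ↾ M₁.E, N ↾ M₂.E, rfl, rfl,
    baseVertices_restrict_subset (hE' ▸ subset_union_left)
      fun B hB => (disjointSum_isBase_iff.1 (hN' B hB)).1,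
    baseVertices_restrict_subset (hE' ▸ subset_union_right)
      fun B hB => (disjointSum_isBase_iff.1 (hN' B hB)).2.1, ?_⟩
  exact (congrArg basePolytope (eq_disjointSum_restrict h hE hN')).trans
    (basePolytope_disjointSum (N ↾ M₁.E) (N ↾ M₂.E) h)

theorem hasHyperplaneSplit_of_disjointSum [M₁.RankFinite] (h : Disjoint M₁.E M₂.E)
    (hs : HasHyperplaneSplit (M₁.disjointSum M₂ h)) :
    HasHyperplaneSplit M₁ ∨ HasHyperplaneSplit M₂ := by
  obtain ⟨N₁, N₂, hE₁, hE₂, hs⟩ := hasHyperplaneSplit_iff.1 hs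
  obtain ⟨K₁, L₁, hK₁E, hL₁E, hK₁, hL₁, hN₁⟩ := exists_basePolytope_eq_add h hE₁ hs.2.1.subset
  obtain ⟨K₂, L₂, hK₂E, hL₂E, hK₂, hL₂, hN₂⟩ := exists_basePolytope_eq_add h hE₂ hs.2.2.1.subset
  rw [hN₁, hN₂, basePolytope_disjointSum] at hs
  exact (IsHyperplaneSplit.of_convexHull_add (disjoint_supportedOn h)
    (baseVertices_subset_supportedOn M₁) (baseVertices_subset_supportedOn M₂) hK₁ hK₂ hL₁ hL₂
    hs).imp (fun hs => ⟨K₁, K₂, hK₁E, hK₂E, hs⟩) (fun hs => ⟨L₁, L₂, hL₁E, hL₂E, hs⟩)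

theorem hasHyperplaneSplit_disjointSum_of_right (h : Disjoint M₁.E M₂.E)
    (hs : HasHyperplaneSplit M₂) : HasHyperplaneSplit (M₁.disjointSum M₂ h) := by
  obtain ⟨N₁, N₂, hE₁, hE₂, hs⟩ := hasHyperplaneSplit_iff.1 hs
  refine hasHyperplaneSplit_iff.2 ⟨M₁.disjointSum N₁ (hE₁ ▸ h), M₁.disjointSum N₂ (hE₂ ▸ h),
    by simp [hE₁], by simp [hE₂], ?_⟩
  rw [basePolytope_disjointSum, basePolytope_disjointSum, basePolytope_disjointSum]
  exact (isHyperplaneSplit_add_iff (disjoint_supportedOn h) (basePolytope_nonempty M₁)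
    (basePolytope_subset_supportedOn M₁) (basePolytope_subset_supportedOn M₂)
    (hE₁ ▸ basePolytope_subset_supportedOn N₁) (hE₂ ▸ basePolytope_subset_supportedOn N₂)).2 hs

theorem hasHyperplaneSplit_disjointSum_of_left (h : Disjoint M₁.E M₂.E)
    (hs : HasHyperplaneSplit M₁) : HasHyperplaneSplit (M₁.disjointSum M₂ h) := by
  rw [disjointSum_comm]
  exact hasHyperplaneSplit_disjointSum_of_right h.symm hs

end Matroid

theorem statement13_general {α : Type*} (M₁ M₂ : Matroid α)
    (hfin₁ : M₁.E.Finite) (h : Disjoint M₁.E M₂.E) :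
    HasHyperplaneSplit (M₁.disjointSum M₂ h) ↔
      HasHyperplaneSplit M₁ ∨ HasHyperplaneSplit M₂ := by
  have : M₁.Finite := ⟨hfin₁⟩
  exact ⟨hasHyperplaneSplit_of_disjointSum h, fun hs =>
    hs.elim (hasHyperplaneSplit_disjointSum_of_left h) (hasHyperplaneSplit_disjointSum_of_right h)⟩

/-- `P(M₁ ⊕ M₂)` admits a hyperplane split iff `P(M₁)` or `P(M₂)` does. -/
theorem statement13 {α : Type*} (M₁ M₂ : Matroid α)
    (hfin₁ : M₁.E.Finite) (hfin₂ : M₂.E.Finite) (h : Disjoint M₁.E M₂.E)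
    (r₁ r₂ : ℕ) (hr₁ : mrk M₁ = r₁) (hr₂ : mrk M₂ = r₂) :
    HasHyperplaneSplit (M₁.disjointSum M₂ h) ↔
      HasHyperplaneSplit M₁ ∨ HasHyperplaneSplit M₂ :=
  statement13_general M₁ M₂ hfin₁ h
end
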